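/- (Delta identity for refined q-trinomials) For all integers L, M ≥ 0: Σ_{j∈ℤ} q^{j(j+1)} ( T(L,M,2j,j) − T(L,M,2j+2,j) ) = δ_{L,0} δ_{M,0}. -/
import Mathlib


open Finset

noncomputable section

/-- The field of rational functions over ℚ in which the identities are stated. -/
abbrev K : Type := RatFunc ℚ

/-- The variable. -/
def tq : K := RatFunc.X

/-- Gaussian binomial coefficient `[n choose k]` in the variable `p`:
`∏_{j=1}^{k} (1 - p^(n-k+j))/(1 - p^j)` when `0 ≤ k ≤ n`, and `0` otherwise. -/
def gb (p : K) (n k : ℤ) : K :=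
  if 0 ≤ k ∧ k ≤ n then
    ∏ j ∈ Finset.range k.toNat, (1 - p ^ (n - k + 1 + (j : ℤ))) / (1 - p ^ (1 + (j : ℤ)))
  else 0

/-- The refined q-trinomial `T(L,M,a,b)`, in the variable `t = q^{1/2}` (so base-`q`
Gaussian binomials use `t^2`):
`T(L,M,a,b) = Σ_{n=0, n+a+L even}^{L} q^{n²/2} [M choose n][M+b+(L-a-n)/2 choose M+b]
[M-b+(L+a-n)/2 choose M-b]`. -/
def Trf (t : K) (L M a b : ℤ) : K :=
  ∑ n ∈ Finset.range (L.toNat + 1),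
    if Even ((n : ℤ) + a + L) then
      t ^ ((n : ℤ) ^ 2) * gb (t ^ 2) M n * gb (t ^ 2) (M + b + (L - a - n) / 2) (M + b) *
        gb (t ^ 2) (M - b + (L + a - n) / 2) (M - b)
    else 0

-- auxiliary lemmas
lemma tq_ne_zero : tq ≠ 0 := RatFunc.X_ne_zero
lemma q0 : (tq ^ 2 : K) ≠ 0 := pow_ne_zero _ tq_ne_zero
lemma q_zpow_ne_one {e : ℤ} (he : 1 ≤ e) : (tq ^ 2) ^ e ≠ 1 := by
  intro h
  lift e to ℕ using (by omega) with n hn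
  rw [zpow_natCast, ← pow_mul] at h
  have h2 : (Polynomial.X : Polynomial ℚ) ^ (2 * n) = 1 := by
    apply RatFunc.algebraMap_injective ℚ
    simpa [map_pow, RatFunc.algebraMap_X, tq] using h
  have h3 := congrArg Polynomial.natDegree h2
  simp [Polynomial.natDegree_X_pow] at h3
  omega
lemma one_sub_ne {e : ℤ} (he : 1 ≤ e) : (1 : K) - (tq ^ 2) ^ e ≠ 0 :=
  sub_ne_zero.mpr (Ne.symm (q_zpow_ne_one he))

lemma gb_of_neg {p : K} {n k : ℤ} (h : ¬(0 ≤ k ∧ k ≤ n)) : gb p n k = 0 := if_neg h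

lemma gb_zero_col {p : K} {n : ℤ} (h : 0 ≤ n) : gb p n 0 = 1 := by
  rw [gb, if_pos ⟨le_refl 0, h⟩]
  simp

lemma gb_self {n : ℤ} (h : 0 ≤ n) : gb (tq ^ 2) n n = 1 := by
  rw [gb, if_pos ⟨h, le_refl n⟩]
  rw [Finset.prod_congr rfl (fun j _ => ?_), Finset.prod_const_one]
  rw [show n - n + 1 + (j : ℤ) = 1 + j by ring]
  exact div_self (one_sub_ne (by omega))

lemma gb_succ_diag {n k : ℤ} (hk : 1 ≤ k) (hkn : k ≤ n) :
    gb (tq ^ 2) n k = gb (tq ^ 2) (n - 1) (k - 1) * ((1 - (tq ^ 2) ^ n) / (1 - (tq ^ 2) ^ k)) := by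
  rw [gb, gb, if_pos ⟨by omega, hkn⟩, if_pos ⟨by omega, by omega⟩]
  have hk' : k.toNat = (k - 1).toNat + 1 := by omega
  rw [hk', Finset.prod_range_succ]
  congr 1
  · apply Finset.prod_congr rfl
    intro j _
    rw [show n - 1 - (k - 1) + 1 + (j : ℤ) = n - k + 1 + j from by ring]
  · rw [show n - k + 1 + (((k - 1).toNat : ℕ) : ℤ) = n from by omega,
      show 1 + (((k - 1).toNat : ℕ) : ℤ) = k from by omega]

lemma gb_succ_col {m k : ℤ} (hk : 1 ≤ k) (hkm : k ≤ m) :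
    gb (tq ^ 2) m k * (1 - (tq ^ 2) ^ k) = gb (tq ^ 2) m (k - 1) * (1 - (tq ^ 2) ^ (m - k + 1)) := by
  rw [gb, gb, if_pos ⟨by omega, by omega⟩, if_pos ⟨by omega, by omega⟩]
  rw [Finset.prod_div_distrib, Finset.prod_div_distrib]
  have hk' : k.toNat = (k - 1).toNat + 1 := by omega
  have hnum : ∏ j ∈ Finset.range k.toNat, (1 - (tq ^ 2) ^ (m - k + 1 + (j : ℤ)))
      = (1 - (tq ^ 2) ^ (m - k + 1)) *
        ∏ j ∈ Finset.range (k - 1).toNat, (1 - (tq ^ 2) ^ (m - (k - 1) + 1 + (j : ℤ))) := by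
    rw [hk', Finset.prod_range_succ', mul_comm]
    congr 1
    · rw [show (m - k + 1 + ((0 : ℕ) : ℤ)) = m - k + 1 from by push_cast; ring]
    · apply Finset.prod_congr rfl
      intro j _
      rw [show (m - k + 1 + ((j + 1 : ℕ) : ℤ)) = m - (k - 1) + 1 + (j : ℤ) from by push_cast; ring]
  have hden : ∏ j ∈ Finset.range k.toNat, (1 - (tq ^ 2) ^ (1 + (j : ℤ)))
      = (∏ j ∈ Finset.range (k - 1).toNat, (1 - (tq ^ 2) ^ (1 + (j : ℤ)))) * (1 - (tq ^ 2) ^ k) := by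
    rw [hk', Finset.prod_range_succ]
    rw [show (1 + (((k - 1).toNat : ℕ) : ℤ)) = k from by omega]
  rw [hnum, hden]
  have hdk : (1 : K) - (tq ^ 2) ^ k ≠ 0 := one_sub_ne hk
  rw [div_mul_eq_mul_div, mul_div_mul_right _ _ hdk]
  ring

lemma pascal {n k : ℤ} (h : ¬(n = 0 ∧ k = 0)) :
    gb (tq ^ 2) n k = gb (tq ^ 2) (n - 1) k + (tq ^ 2) ^ (n - k) * gb (tq ^ 2) (n - 1) (k - 1) := by
  by_cases hk0 : 0 ≤ k ∧ k ≤ n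
  · obtain ⟨hk, hkn⟩ := hk0
    rcases eq_or_lt_of_le hk with hk1 | hk1
    · -- k = 0, so n ≥ 1
      have hn1 : 1 ≤ n := by omega
      rw [← hk1, gb_zero_col (by omega), gb_zero_col (by omega : (0:ℤ) ≤ n - 1),
        gb_of_neg (by omega : ¬((0:ℤ) ≤ 0 - 1 ∧ 0 - 1 ≤ n - 1))]
      ring
    · rcases eq_or_lt_of_le hkn with hkn1 | hkn1
      · -- k = n
        subst hkn1
        rw [gb_self (by omega), gb_of_neg (by omega : ¬(0 ≤ k ∧ k ≤ k - 1)), gb_self (by omega)]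
        simp
      · -- 1 ≤ k < n
        rw [gb_succ_diag (by omega) (by omega)]
        have hcol := gb_succ_col (m := n - 1) (by omega : 1 ≤ k) (by omega : k ≤ n - 1)
        rw [show n - 1 - k + 1 = n - k from by ring] at hcol
        have e1 : (tq ^ 2) ^ (n - k) * (tq ^ 2) ^ k = (tq ^ 2) ^ n := by
          rw [← zpow_add₀ q0]; congr 1; ring
        have hdk : (1 : K) - (tq ^ 2) ^ k ≠ 0 := one_sub_ne (by omega)
        rw [mul_div_assoc', div_eq_iff hdk]
        linear_combination - hcol + gb (tq ^ 2) (n - 1) (k - 1) * e1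
  · rw [gb_of_neg hk0, gb_of_neg (by omega), gb_of_neg (by omega)]
    ring

def Fx (m M j : ℤ) : K :=
  (tq ^ 2) ^ (j * j + m - M) * (gb (tq ^ 2) (m - 1) (M + j - 1) * gb (tq ^ 2) m (M - j))

lemma key_step {m M j : ℤ} (hM : 0 ≤ M) (hMm : M ≤ m) (hne : ¬(m = 0 ∧ j = 0)) :
    (tq ^ 2) ^ (j * (j + 1)) *
      (gb (tq ^ 2) m (M + j) * gb (tq ^ 2) m (M - j) -
        gb (tq ^ 2) (m - 1) (M + j) * gb (tq ^ 2) (m + 1) (M - j))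
    = Fx m M j - Fx m M (j + 1) := by
  have h1 : gb (tq ^ 2) m (M + j) = gb (tq ^ 2) (m - 1) (M + j) +
      (tq ^ 2) ^ (m - (M + j)) * gb (tq ^ 2) (m - 1) (M + j - 1) := pascal (by omega)
  have h2 : gb (tq ^ 2) (m + 1) (M - j) = gb (tq ^ 2) (m + 1 - 1) (M - j) +
      (tq ^ 2) ^ (m + 1 - (M - j)) * gb (tq ^ 2) (m + 1 - 1) (M - j - 1) := pascal (by omega)
  rw [show m + 1 - 1 = m from by ring] at h2
  rw [h1, h2, Fx, Fx]
  rw [show M + (j + 1) - 1 = M + j from by ring, show M - (j + 1) = M - j - 1 from by ring]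
  have e1 : (tq ^ 2) ^ (j * (j + 1)) * (tq ^ 2) ^ (m - (M + j)) = (tq ^ 2) ^ (j * j + m - M) := by
    rw [← zpow_add₀ q0]; congr 1; ring
  have e2 : (tq ^ 2) ^ (j * (j + 1)) * (tq ^ 2) ^ (m + 1 - (M - j)) =
      (tq ^ 2) ^ ((j + 1) * (j + 1) + m - M) := by
    rw [← zpow_add₀ q0]; congr 1; ring
  linear_combination (gb (tq ^ 2) (m - 1) (M + j - 1) * gb (tq ^ 2) m (M - j)) * e1 -
    (gb (tq ^ 2) (m - 1) (M + j) * gb (tq ^ 2) m (M - j - 1)) * e2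

lemma sum_tele (F : ℤ → K) (a : ℤ) (n : ℕ) :
    ∑ j ∈ Finset.Icc a (a - 1 + n), (F j - F (j + 1)) = F a - F (a - 1 + n + 1) := by
  induction n with
  | zero =>
    rw [show a - 1 + (0 : ℕ) = a - 1 from by push_cast; ring, Finset.Icc_eq_empty (by omega)]
    rw [show a - 1 + 1 = a from by ring]
    simp
  | succ n ih =>
    have hins : Finset.Icc a (a - 1 + ((n : ℕ) + 1 : ℕ)) =
        insert (a + n) (Finset.Icc a (a - 1 + n)) := by
      ext x
      simp only [Finset.mem_Icc, Finset.mem_insert]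
      push_cast
      omega
    rw [hins, Finset.sum_insert (by simp only [Finset.mem_Icc]; omega), ih]
    rw [show a - 1 + ((n : ℕ) + 1 : ℕ) + 1 = a + n + 1 from by push_cast; ring]
    ring

lemma sum_tele' (F : ℤ → K) (a b : ℤ) (h : a ≤ b + 1) :
    ∑ j ∈ Finset.Icc a b, (F j - F (j + 1)) = F a - F (b + 1) := by
  obtain ⟨n, hn⟩ : ∃ n : ℕ, b = a - 1 + n := ⟨(b + 1 - a).toNat, by omega⟩
  subst hn
  rw [sum_tele, show a - 1 + (n : ℤ) + 1 = a - 1 + n + 1 from by ring]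

lemma gb_inner_sum (m M : ℤ) (hM : 0 ≤ M) (hMm : M ≤ m) :
    ∑ j ∈ Finset.Icc (-M) M,
      (tq ^ 2) ^ (j * (j + 1)) *
        (gb (tq ^ 2) m (M + j) * gb (tq ^ 2) m (M - j) -
          gb (tq ^ 2) (m - 1) (M + j) * gb (tq ^ 2) (m + 1) (M - j))
    = if m = 0 ∧ M = 0 then 1 else 0 := by
  by_cases h0 : m = 0 ∧ M = 0
  · obtain ⟨rfl, rfl⟩ := h0
    rw [if_pos ⟨rfl, rfl⟩]
    rw [show (-(0:ℤ)) = 0 from by ring, Finset.Icc_self, Finset.sum_singleton]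
    simp only [add_zero, sub_zero, zero_add, zero_sub, zero_mul, zpow_zero, one_mul]
    rw [gb_zero_col (le_refl (0:ℤ)), gb_zero_col (by omega : (0:ℤ) ≤ 1),
      gb_of_neg (by omega : ¬((0:ℤ) ≤ 0 ∧ (0:ℤ) ≤ -1))]
    ring
  · rw [if_neg h0]
    have hm1 : 1 ≤ m := by omega
    calc ∑ j ∈ Finset.Icc (-M) M,
          (tq ^ 2) ^ (j * (j + 1)) *
            (gb (tq ^ 2) m (M + j) * gb (tq ^ 2) m (M - j) -
              gb (tq ^ 2) (m - 1) (M + j) * gb (tq ^ 2) (m + 1) (M - j))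
        = ∑ j ∈ Finset.Icc (-M) M, (Fx m M j - Fx m M (j + 1)) :=
          Finset.sum_congr rfl (fun j _ => key_step hM hMm (by omega))
      _ = Fx m M (-M) - Fx m M (M + 1) := sum_tele' (Fx m M) (-M) M (by omega)
      _ = 0 := by
          rw [Fx, Fx, gb_of_neg (by omega : ¬(0 ≤ M + -M - 1 ∧ M + -M - 1 ≤ m - 1)),
            gb_of_neg (by omega : ¬(0 ≤ M - (M + 1) ∧ M - (M + 1) ≤ m))]
          ring

/-- Delta identity: `Σ_{j∈ℤ} q^{j(j+1)} (T(L,M,2j,j) − T(L,M,2j+2,j)) = δ_{L,0} δ_{M,0}`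
(terms with `|j| > M` vanish; `q = tq^2`). -/
theorem T_delta (L M : ℕ) :
    ∑ j ∈ Finset.Icc (-(M : ℤ)) M,
      (tq ^ 2) ^ (j * (j + 1)) * (Trf tq L M (2 * j) j - Trf tq L M (2 * j + 2) j) =
      if L = 0 ∧ M = 0 then 1 else 0 := by
  calc ∑ j ∈ Finset.Icc (-(M : ℤ)) M,
        (tq ^ 2) ^ (j * (j + 1)) * (Trf tq L M (2 * j) j - Trf tq L M (2 * j + 2) j)
      = ∑ j ∈ Finset.Icc (-(M : ℤ)) M, ∑ n ∈ Finset.range (L + 1),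
          (tq ^ 2) ^ (j * (j + 1)) *
            ((if Even ((n : ℤ) + 2 * j + L) then
                tq ^ ((n : ℤ) ^ 2) * gb (tq ^ 2) M n *
                  gb (tq ^ 2) ((M : ℤ) + j + ((L : ℤ) - 2 * j - n) / 2) ((M : ℤ) + j) *
                  gb (tq ^ 2) ((M : ℤ) - j + ((L : ℤ) + 2 * j - n) / 2) ((M : ℤ) - j)
              else 0) -
             (if Even ((n : ℤ) + (2 * j + 2) + L) then
                tq ^ ((n : ℤ) ^ 2) * gb (tq ^ 2) M n *
                  gb (tq ^ 2) ((M : ℤ) + j + ((L : ℤ) - (2 * j + 2) - n) / 2) ((M : ℤ) + j) *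
                  gb (tq ^ 2) ((M : ℤ) - j + ((L : ℤ) + (2 * j + 2) - n) / 2) ((M : ℤ) - j)
              else 0)) := by
        apply Finset.sum_congr rfl
        intro j _
        rw [Trf, Trf, Int.toNat_natCast, ← Finset.sum_sub_distrib, Finset.mul_sum]
    _ = ∑ n ∈ Finset.range (L + 1), (if n = 0 ∧ L = 0 ∧ M = 0 then 1 else 0) := by
        rw [Finset.sum_comm]
        apply Finset.sum_congr rfl
        intro n hn
        have hnL : (n : ℤ) ≤ L := by
          have := Finset.mem_range.mp hn; omega
        by_cases hpar : Even ((n : ℤ) + L)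
        · obtain ⟨c, hc⟩ := hpar
          set m : ℤ := (M : ℤ) + ((L : ℤ) - n) / 2 with hmdef
          have hm2 : (L : ℤ) - n = 2 * (m - M) := by omega
          have hMm : (M : ℤ) ≤ m := by omega
          calc ∑ j ∈ Finset.Icc (-(M : ℤ)) M, _
              = ∑ j ∈ Finset.Icc (-(M : ℤ)) M,
                  (tq ^ ((n : ℤ) ^ 2) * gb (tq ^ 2) M n) *
                    ((tq ^ 2) ^ (j * (j + 1)) *
                      (gb (tq ^ 2) m ((M : ℤ) + j) * gb (tq ^ 2) m ((M : ℤ) - j) -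
                        gb (tq ^ 2) (m - 1) ((M : ℤ) + j) * gb (tq ^ 2) (m + 1) ((M : ℤ) - j))) := by
                apply Finset.sum_congr rfl
                intro j _
                rw [if_pos (by rw [Int.even_iff] at *; omega),
                  if_pos (by rw [Int.even_iff] at *; omega)]
                rw [show (M : ℤ) + j + ((L : ℤ) - 2 * j - n) / 2 = m from by omega,
                  show (M : ℤ) - j + ((L : ℤ) + 2 * j - n) / 2 = m from by omega,
                  show (M : ℤ) + j + ((L : ℤ) - (2 * j + 2) - n) / 2 = m - 1 from by omega,
                  show (M : ℤ) - j + ((L : ℤ) + (2 * j + 2) - n) / 2 = m + 1 from by omega]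
                ring
            _ = (tq ^ ((n : ℤ) ^ 2) * gb (tq ^ 2) M n) *
                  (if m = 0 ∧ (M : ℤ) = 0 then 1 else 0) := by
                rw [← Finset.mul_sum, gb_inner_sum m M (by omega) hMm]
            _ = (if n = 0 ∧ L = 0 ∧ M = 0 then 1 else 0) := by
                by_cases h0 : m = 0 ∧ (M : ℤ) = 0
                · rw [if_pos h0]
                  have hM0 : M = 0 := by omega
                  have hnL0 : (n : ℤ) = L := by omega
                  by_cases hL0 : L = 0
                  · have hn0 : n = 0 := by omega
                    rw [if_pos ⟨hn0, hL0, hM0⟩]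
                    subst hn0; subst hM0
                    simp only [Nat.cast_zero]
                    rw [gb_zero_col (le_refl (0:ℤ))]
                    norm_num
                  · rw [if_neg (by rintro ⟨_, h1, _⟩; exact hL0 h1)]
                    rw [gb_of_neg (by omega : ¬(0 ≤ (n : ℤ) ∧ (n : ℤ) ≤ (M : ℤ)))]
                    ring
                · rw [if_neg h0, if_neg (by rintro ⟨h1, h2, h3⟩; exact h0 (by omega))]
                  ring
        · rw [if_neg (by rintro ⟨rfl, rfl, rfl⟩; exact hpar (by norm_num))]
          apply Finset.sum_eq_zero
          intro j _
          rw [if_neg (by rw [Int.even_iff] at *; omega),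
            if_neg (by rw [Int.even_iff] at *; omega)]
          ring
    _ = if L = 0 ∧ M = 0 then 1 else 0 := by
        by_cases hLM : L = 0 ∧ M = 0
        · obtain ⟨rfl, rfl⟩ := hLM
          simp
        · rw [if_neg hLM]
          apply Finset.sum_eq_zero
          intro n _
          rw [if_neg (by rintro ⟨_, h1, h2⟩; exact hLM ⟨h1, h2⟩)]
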